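/- Let (X,d_X) be a semimetric space. If there exists a weak similarity Φ : X → X that is not an isometry, then there exist sets A₁, A₂, A₃ ⊆ D(X) with A₂ ≠ ∅ such that D(X) (with the order induced from ℝ) is order-isomorphic to the ordered sum A₁ + A₂·tp(ℤ) + A₃, i.e., to the lexicographic sum A₁ ⊕ (ℤ ×_lex A₂) ⊕ A₃ where the middle summand consists of ℤ-many consecutive copies of A₂. -/

import Mathlib

/-- A semimetric on `X`: nonnegative, symmetric, vanishing exactly on the diagonal. -/
def IsSemimetric {X : Type*} (d : X → X → ℝ) : Prop :=
  (∀ x y, 0 ≤ d x y) ∧ (∀ x y, d x y = d y x) ∧ ∀ x y, d x y = 0 ↔ x = y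

/-- The distance set `D(X)` of a semimetric space `(X, d)`. -/
def distSet {X : Type*} (d : X → X → ℝ) : Set ℝ := {r | ∃ x y, d x y = r}

/-! A weak similarity `Φ` with scaling function `f` makes `f` an order automorphism `G` of the
distance set: `f (d (Φ x) (Φ y)) = d x y` gives surjectivity. As `Φ` is not an isometry, `G` moves
some point, so (after replacing `G` by `G⁻¹` if needed) `a < G a` for some `a`. The translates
`Gⁿ '' [a, G a)`, `n : ℤ`, are consecutive intervals that tile the convex hull of the orbit
`(Gⁿ a)ₙ`, which is therefore `ℤ ×ₗ [a, G a)`; the points below, resp. above, the whole orbit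
form `A₁`, resp. `A₃`. -/

open Set

theorem Monotone.exists_int_mem_Ico_succ {α : Type*} [LinearOrder α] {f : ℤ → α}
    (hf : Monotone f) {x : α} {m k : ℤ} (hm : f m ≤ x) (hk : x < f k) :
    ∃ n, x ∈ Ico (f n) (f (n + 1)) := by
  have hbdd : ∃ b, ∀ n, f n ≤ x → n ≤ b :=
    ⟨k, fun n hn => le_of_not_gt fun hkn => (hk.trans_le (hn.trans' (hf hkn.le))).false⟩
  obtain ⟨n, hn, hmax⟩ := Int.exists_greatest_of_bdd hbdd ⟨m, hm⟩
  exact ⟨n, hn, lt_of_not_ge fun h => (hmax _ h).not_gt (Int.lt_succ n)⟩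

theorem Sum.Lex.strictMono_elim {α β γ : Type*} [Preorder α] [Preorder β] [Preorder γ]
    {f : α → γ} {g : β → γ} (hf : StrictMono f) (hg : StrictMono g) (hfg : ∀ a b, f a < g b) :
    StrictMono fun z : α ⊕ₗ β => Sum.elim f g (ofLex z) := by
  rintro (a | b) (a' | b') h
  · exact hf (Sum.Lex.inl_lt_inl_iff.mp h)
  · exact hfg a b'
  · exact (Sum.Lex.not_inr_lt_inl h).elim
  · exact hg (Sum.Lex.inr_lt_inr_iff.mp h)

section

variable {L : Type*} [LinearOrder L] {s t : Set L}

noncomputable def sumLexLowerComplUpperOrderIso (hs : IsLowerSet s) (ht : IsUpperSet t)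
    (hst : Disjoint s t) : s ⊕ₗ ((s ∪ t)ᶜ : Set L) ⊕ₗ t ≃o L := by
  refine StrictMono.orderIsoOfSurjective
    (fun z => Sum.elim (↑) (fun w => Sum.elim (↑) (↑) (ofLex w)) (ofLex z))
    (Sum.Lex.strictMono_elim (Subtype.strictMono_coe _)
      (Sum.Lex.strictMono_elim (Subtype.strictMono_coe _) (Subtype.strictMono_coe _) ?_) ?_) ?_
  · exact fun m c => lt_of_not_ge fun h => m.2 (Or.inr (ht h c.2))
  · rintro a (m | c)
    · exact lt_of_not_ge fun h => m.2 (Or.inl (hs h a.2))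
    · exact lt_of_not_ge fun h => disjoint_left.mp hst a.2 (ht h c.2)
  · intro x
    by_cases hxs : x ∈ s
    · exact ⟨toLex (.inl ⟨x, hxs⟩), rfl⟩
    by_cases hxt : x ∈ t
    · exact ⟨toLex (.inr (toLex (.inr ⟨x, hxt⟩))), rfl⟩
    · exact ⟨toLex (.inr (toLex (.inl ⟨x, by simp [hxs, hxt]⟩))), rfl⟩

end

namespace OrderIso

variable {L : Type*} [LinearOrder L] (G : L ≃o L) {a : L}

def belowOrbit (a : L) : Set L := {x | ∀ n : ℤ, x < (G ^ n) a}

def aboveOrbit (a : L) : Set L := {x | ∀ n : ℤ, (G ^ n) a ≤ x}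

theorem zpow_apply_apply (n : ℤ) (x : L) : (G ^ n) (G x) = (G ^ (n + 1)) x := by
  rw [zpow_add_one]; rfl

variable {G}

theorem strictMono_zpow_apply (ha : a < G a) : StrictMono fun n : ℤ => (G ^ n) a :=
  strictMono_int_of_lt_succ fun n => by
    simpa only [zpow_apply_apply] using (G ^ n).strictMono ha

theorem zpow_apply_mem_Ico {y : L} (hy : y ∈ Ico a (G a)) (n : ℤ) :
    (G ^ n) y ∈ Ico ((G ^ n) a) ((G ^ (n + 1)) a) := by
  rw [← zpow_apply_apply]
  exact ⟨(G ^ n).monotone hy.1, (G ^ n).strictMono hy.2⟩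

theorem mem_compl_belowOrbit_union_aboveOrbit {x : L} :
    x ∈ (G.belowOrbit a ∪ G.aboveOrbit a)ᶜ ↔ (∃ m : ℤ, (G ^ m) a ≤ x) ∧ ∃ k : ℤ, x < (G ^ k) a := by
  simp [belowOrbit, aboveOrbit]

theorem zpow_apply_mem_compl_belowOrbit_union_aboveOrbit {y : L} (hy : y ∈ Ico a (G a)) (n : ℤ) :
    (G ^ n) y ∈ (G.belowOrbit a ∪ G.aboveOrbit a)ᶜ :=
  have hmem := zpow_apply_mem_Ico hy n
  mem_compl_belowOrbit_union_aboveOrbit.mpr ⟨⟨n, hmem.1⟩, ⟨n + 1, hmem.2⟩⟩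

theorem isLowerSet_belowOrbit : IsLowerSet (G.belowOrbit a) :=
  fun _ _ hxy hx n => hxy.trans_lt (hx n)

theorem isUpperSet_aboveOrbit : IsUpperSet (G.aboveOrbit a) :=
  fun _ _ hxy hx n => (hx n).trans hxy

theorem disjoint_belowOrbit_aboveOrbit : Disjoint (G.belowOrbit a) (G.aboveOrbit a) :=
  disjoint_left.mpr fun _ hb ha => (hb 0).not_ge (ha 0)

noncomputable def intLexIcoOrderIso (ha : a < G a) :
    ℤ ×ₗ Ico a (G a) ≃o ((G.belowOrbit a ∪ G.aboveOrbit a)ᶜ : Set L) := by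
  refine StrictMono.orderIsoOfSurjective
    (fun p => ⟨(G ^ (ofLex p).1) (ofLex p).2,
      zpow_apply_mem_compl_belowOrbit_union_aboveOrbit (ofLex p).2.2 _⟩) ?_ ?_
  · rintro ⟨n, y⟩ ⟨m, z⟩ h
    rcases Prod.Lex.toLex_lt_toLex.mp h with hnm | ⟨rfl, hyz⟩
    · calc (G ^ n) y < (G ^ (n + 1)) a := (zpow_apply_mem_Ico y.2 n).2
        _ ≤ (G ^ m) a := (strictMono_zpow_apply ha).monotone hnm
        _ ≤ (G ^ m) z := (zpow_apply_mem_Ico z.2 m).1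
    · exact (G ^ n).strictMono hyz
  · rintro ⟨x, hx⟩
    obtain ⟨⟨m, hm⟩, ⟨k, hk⟩⟩ := mem_compl_belowOrbit_union_aboveOrbit.mp hx
    obtain ⟨n, hn₁, hn₂⟩ := (strictMono_zpow_apply ha).monotone.exists_int_mem_Ico_succ hm hk
    refine ⟨toLex (n, ⟨(G ^ n).symm x, ?_, ?_⟩), Subtype.ext ((G ^ n).apply_symm_apply x)⟩
    · exact (G ^ n).le_symm_apply.mpr hn₁
    · rwa [(G ^ n).symm_apply_lt, zpow_apply_apply]

noncomputable def sumLexIntLexOrderIso (ha : a < G a) :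
    L ≃o G.belowOrbit a ⊕ₗ (ℤ ×ₗ Ico a (G a)) ⊕ₗ G.aboveOrbit a :=
  (sumLexLowerComplUpperOrderIso isLowerSet_belowOrbit isUpperSet_aboveOrbit
    disjoint_belowOrbit_aboveOrbit).symm.trans
    (sumLexCongr (refl _) (sumLexCongr (intLexIcoOrderIso ha).symm (refl _)))

theorem exists_lt_apply_of_apply_ne {x : L} (hx : G x ≠ x) : ∃ (H : L ≃o L) (b : L), b < H b := by
  rcases hx.lt_or_gt with hlt | hgt
  · exact ⟨G.symm, G x, by rwa [symm_apply_apply]⟩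
  · exact ⟨G, x, hgt⟩

end OrderIso

noncomputable def Set.imageValOrderIso {α : Type*} [LinearOrder α] {D : Set α} (B : Set D) :
    B ≃o ((↑) '' B : Set α) :=
  StrictMonoOn.orderIso _ B ((Subtype.strictMono_coe _).strictMonoOn B)

theorem stmt15_general {X : Type*} (dX : X → X → ℝ)
    (h : ∃ (Φ : X → X) (f : ℝ → ℝ),
      Function.Surjective Φ ∧ StrictMonoOn f (distSet dX) ∧
      Set.MapsTo f (distSet dX) (distSet dX) ∧
      (∀ x y, dX x y = f (dX (Φ x) (Φ y))) ∧
      ¬ ∀ x y, dX (Φ x) (Φ y) = dX x y) :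
    ∃ A₁ A₂ A₃ : Set ℝ, A₁ ⊆ distSet dX ∧ A₂ ⊆ distSet dX ∧ A₃ ⊆ distSet dX ∧
      A₂.Nonempty ∧
      Nonempty (↥(distSet dX) ≃o (↥A₁ ⊕ₗ ((ℤ ×ₗ ↥A₂) ⊕ₗ ↥A₃))) := by
  obtain ⟨Φ, f, -, hf, hmaps, hdist, hne⟩ := h
  set D := distSet dX
  have hsurj : SurjOn f D D := by
    rintro _ ⟨x, y, rfl⟩
    exact ⟨_, ⟨Φ x, Φ y, rfl⟩, (hdist x y).symm⟩
  let G : D ≃o D := (hf.orderIso f D).trans (OrderIso.setCongr _ _ (hsurj.image_eq_of_mapsTo hmaps))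
  obtain ⟨x, y, hxy⟩ : ∃ x y, dX (Φ x) (Φ y) ≠ dX x y := by simpa only [not_forall] using hne
  have hG : G ⟨_, Φ x, Φ y, rfl⟩ ≠ ⟨_, Φ x, Φ y, rfl⟩ := fun heq =>
    hxy ((congrArg Subtype.val heq).symm.trans (hdist x y).symm)
  obtain ⟨H, b, hb⟩ := OrderIso.exists_lt_apply_of_apply_ne hG
  refine ⟨(↑) '' H.belowOrbit b, (↑) '' Ico b (H b), (↑) '' H.aboveOrbit b,
    Subtype.coe_image_subset _ _, Subtype.coe_image_subset _ _, Subtype.coe_image_subset _ _,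
    ⟨b, b, left_mem_Ico.mpr hb, rfl⟩, ⟨(OrderIso.sumLexIntLexOrderIso hb).trans ?_⟩⟩
  exact OrderIso.sumLexCongr (Set.imageValOrderIso _) (OrderIso.sumLexCongr
    (Prod.Lex.prodLexCongr (OrderIso.refl _) (Set.imageValOrderIso _)) (Set.imageValOrderIso _))

theorem stmt15 {X : Type*} (dX : X → X → ℝ) (hX : IsSemimetric dX)
    (h : ∃ (Φ : X → X) (f : ℝ → ℝ),
      Function.Surjective Φ ∧ StrictMonoOn f (distSet dX) ∧
      Set.MapsTo f (distSet dX) (distSet dX) ∧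
      (∀ x y, dX x y = f (dX (Φ x) (Φ y))) ∧
      ¬ ∀ x y, dX (Φ x) (Φ y) = dX x y) :
    ∃ A₁ A₂ A₃ : Set ℝ, A₁ ⊆ distSet dX ∧ A₂ ⊆ distSet dX ∧ A₃ ⊆ distSet dX ∧
      A₂.Nonempty ∧
      Nonempty (↥(distSet dX) ≃o (↥A₁ ⊕ₗ ((ℤ ×ₗ ↥A₂) ⊕ₗ ↥A₃))) :=
  stmt15_general dX h
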